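/- For the generalized non-separable cost f^GNS(α,ρ) = ½(α/u_max)² − (α/u_max)(1 − r) where r = ½(ρ¹/ρ¹_jam + ρ²/ρ²_jam), the minimizer of f^GNS(α,ρ) + αp over α ∈ [0,u_max] is α* = max(min(u_max(1 − r − u_max p), u_max), 0); in particular when p = 0 and 0 ≤ r ≤ 1 the optimal speed is u_max(1 − r), i.e., the Greenshields speed with occupancy r. -/
import Mathlib


/-- Generalized non-separable cost: argmin of `f^GNS + αp` over `[0,u_max]` is
the clamped value; at `p = 0` with `r ∈ [0,1]` the optimal speed is the
Greenshields speed `u_max (1 - r)`. -/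
theorem gns_cost_minimizer (umax ρjam₁ ρjam₂ ρ₁ ρ₂ : ℝ) (humax : 0 < umax)
    (hj₁ : 0 < ρjam₁) (hj₂ : 0 < ρjam₂) (hρ₁ : 0 ≤ ρ₁) (hρ₂ : 0 ≤ ρ₂)
    (r : ℝ) (hr : r = (1 / 2) * (ρ₁ / ρjam₁ + ρ₂ / ρjam₂)) :
    (∀ p : ℝ,
      IsMinOn (fun α : ℝ => (1 / 2) * (α / umax) ^ 2 - α / umax + (α / umax) * r + α * p)
        (Set.Icc (0 : ℝ) umax) (max (min (umax * (1 - r - umax * p)) umax) 0)) ∧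
    (0 ≤ r → r ≤ 1 → max (min (umax * (1 - r - umax * 0)) umax) 0 = umax * (1 - r)) := by
  have hne : umax ≠ 0 := ne_of_gt humax
  constructor
  · intro p α hα
    obtain ⟨h0, h1⟩ := hα
    set c := umax * (1 - r - umax * p) with hc
    have hf : ∀ x : ℝ, (1 / 2) * (x / umax) ^ 2 - x / umax + (x / umax) * r + x * p
        = (x ^ 2 - 2 * x * c) / (2 * umax ^ 2) := by
      intro x; rw [hc]; field_simp; ring
    simp only [Set.mem_setOf_eq, hf]
    have hden : (0 : ℝ) ≤ 2 * umax ^ 2 := by positivity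
    rcases le_total c 0 with h | h
    · have hm : max (min c umax) 0 = 0 :=
        max_eq_right (le_trans (min_le_left _ _) h)
      rw [hm]
      apply div_le_div_of_nonneg_right ?_ hden <;> nlinarith
    · rcases le_total umax c with h' | h'
      · have hm : max (min c umax) 0 = umax := by
          rw [min_eq_right h']; exact max_eq_left humax.le
        rw [hm]
        apply div_le_div_of_nonneg_right ?_ hden <;> nlinarith
      · have hm : max (min c umax) 0 = c := by
          rw [min_eq_left h']; exact max_eq_left h
        rw [hm]
        apply div_le_div_of_nonneg_right ?_ hden <;> nlinarith [sq_nonneg (α - c)]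
  · intro h0 h1
    rw [mul_zero, sub_zero]
    have hle : umax * (1 - r) ≤ umax := by nlinarith
    have hge : 0 ≤ umax * (1 - r) := by nlinarith
    rw [min_eq_left hle, max_eq_left hge]
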